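/- arXiv:1708.02235 — 2 statements merged into one kernel-verified Lean document; each statement's English description precedes it below -/
import Mathlib

section
/- Let E be a real Banach space, P : E → E a continuous linear map, S, T : ℝ → (E → E) two families of continuous linear operators such that for every x ∈ E the maps t ↦ S(t)x and t ↦ T(t)x are continuous, and suppose there are constants M, M_Q > 0 and ω, ω_Q ∈ ℝ with ‖S(t)‖ ≤ M·exp(ω·t) and ‖T(t)‖ ≤ M_Q·exp(ω_Q·t) for all t ≥ 0. Fix T > 0, an integer p ≥ 1, a memory length Δt ≥ 0, and set A₁ = max(1, exp(T·(ω − ω_Q))), A₂ = max(1, exp(T·ω_Q)). Then for every v ∈ E and every t with Δt ≤ t ≤ T, the error of the Type-I finite memory approximation satisfies ‖∫₀^{t−Δt} ((t−Δt−σ)^{p−1}/(p−1)!) · (∫₀^σ P(S(s)(P(T(σ + Δt − s)v))) ds) dσ‖ ≤ M·M_Q·‖P‖²·A₁·A₂·‖v‖·(t−Δt)^{p+1}/(p+1)!. -/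
open MeasureTheory intervalIntegral Filter

/-!
Writing `exp (ω s) exp (ωQ (r - s)) = exp ((ω - ωQ) s) exp (ωQ r)` with `s, r ∈ [0, Tf]`, where
`r = σ + Δt`, bounds the integrand of the inner integral by the constant
`C = M MQ ‖P‖² A₁ A₂ ‖v‖`, so the inner integral over `[0, σ]` is at most `C σ`. Integrating this
against the Cauchy kernel `(τ - σ)^(p-1) / (p-1)!` over `[0, τ]`, `τ = t - Δt`, gives `C τ^(p+1) / (p+1)!`.
-/

theorem Real.exp_mul_le_max_one_exp_mul {c x b : ℝ} (hx : 0 ≤ x) (hxb : x ≤ b) :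
    Real.exp (c * x) ≤ max 1 (Real.exp (b * c)) := by
  rcases le_total c 0 with hc | hc
  · exact le_max_of_le_left <| Real.exp_le_one_iff.2 (mul_nonpos_of_nonpos_of_nonneg hc hx)
  · exact le_max_of_le_right <| Real.exp_le_exp.2 (by rw [mul_comm b]; gcongr)

theorem Real.exp_mul_mul_exp_mul_sub_le {ω ωQ s r b : ℝ} (hs : 0 ≤ s) (hsb : s ≤ b)
    (hr : 0 ≤ r) (hrb : r ≤ b) :
    Real.exp (ω * s) * Real.exp (ωQ * (r - s)) ≤
      max 1 (Real.exp (b * (ω - ωQ))) * max 1 (Real.exp (b * ωQ)) := by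
  have hsplit : ω * s + ωQ * (r - s) = (ω - ωQ) * s + ωQ * r := by ring
  rw [← Real.exp_add, hsplit, Real.exp_add]
  exact mul_le_mul (exp_mul_le_max_one_exp_mul hs hsb) (exp_mul_le_max_one_exp_mul hr hrb)
    (Real.exp_nonneg _) (zero_le_one.trans (le_max_left _ _))

theorem ContinuousLinearMap.norm_apply_apply_apply_apply_le {𝕜 E : Type*}
    [NontriviallyNormedField 𝕜] [SeminormedAddCommGroup E] [NormedSpace 𝕜 E]
    (P A B : E →L[𝕜] E) (v : E) : ‖P (A (P (B v)))‖ ≤ ‖P‖ ^ 2 * ‖A‖ * ‖B‖ * ‖v‖ :=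
  (P.le_opNorm_of_le (A.le_opNorm_of_le (P.le_opNorm_of_le (B.le_opNorm v)))).trans_eq (by ring)

theorem integral_sub_pow_div_factorial_mul_self (τ : ℝ) (q : ℕ) :
    ∫ σ in (0:ℝ)..τ, (τ - σ) ^ q / q.factorial * σ = τ ^ (q + 2) / (q + 2).factorial := by
  have hsub : ∫ σ in (0:ℝ)..τ, (τ - σ) ^ q * σ = ∫ u in (0:ℝ)..τ, (τ * u ^ q - u ^ (q + 1)) :=
    calc ∫ σ in (0:ℝ)..τ, (τ - σ) ^ q * σ
        = ∫ σ in (0:ℝ)..τ, (fun u => u ^ q * (τ - u)) (τ - σ) := by simp only [sub_sub_cancel]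
      _ = ∫ u in τ - τ..τ - 0, u ^ q * (τ - u) :=
        integral_comp_sub_left (fun u : ℝ => u ^ q * (τ - u)) τ
      _ = ∫ u in (0:ℝ)..τ, (τ * u ^ q - u ^ (q + 1)) := by
        rw [sub_self, sub_zero]
        exact integral_congr fun u _ => by ring
  simp_rw [div_mul_eq_mul_div, intervalIntegral.integral_div, hsub]
  rw [intervalIntegral.integral_sub (Continuous.intervalIntegrable (by fun_prop) _ _)
    (Continuous.intervalIntegrable (by fun_prop) _ _), intervalIntegral.integral_const_mul,
    integral_pow, integral_pow]
  simp only [Nat.factorial_succ]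
  push_cast
  field_simp
  ring

theorem norm_integral_sub_pow_div_factorial_smul_le {E : Type*} [NormedAddCommGroup E]
    [NormedSpace ℝ E] {f : ℝ → E} {C τ : ℝ} (q : ℕ) (hτ : 0 ≤ τ)
    (hf : ∀ σ ∈ Set.Icc 0 τ, ‖f σ‖ ≤ C * σ) :
    ‖∫ σ in (0:ℝ)..τ, ((τ - σ) ^ q / q.factorial) • f σ‖ ≤
      C * τ ^ (q + 2) / (q + 2).factorial := by
  calc ‖∫ σ in (0:ℝ)..τ, ((τ - σ) ^ q / q.factorial) • f σ‖
      ≤ ∫ σ in (0:ℝ)..τ, C * ((τ - σ) ^ q / q.factorial * σ) := by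
        refine norm_integral_le_of_norm_le hτ (Eventually.of_forall ?_)
          (Continuous.intervalIntegrable (by fun_prop) _ _)
        rintro σ ⟨hσ0, hστ⟩
        have hkernel : 0 ≤ (τ - σ) ^ q / q.factorial := by
          have : 0 ≤ τ - σ := sub_nonneg.2 hστ
          positivity
        rw [norm_smul, Real.norm_of_nonneg hkernel]
        calc (τ - σ) ^ q / q.factorial * ‖f σ‖ ≤ (τ - σ) ^ q / q.factorial * (C * σ) :=
              mul_le_mul_of_nonneg_left (hf σ ⟨hσ0.le, hστ⟩) hkernel
          _ = C * ((τ - σ) ^ q / q.factorial * σ) := by ring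
    _ = C * τ ^ (q + 2) / (q + 2).factorial := by
        rw [intervalIntegral.integral_const_mul, integral_sub_pow_div_factorial_mul_self,
          mul_div_assoc]

theorem norm_memory_integrand_le {E : Type*} [NormedAddCommGroup E] [NormedSpace ℝ E]
    {P : E →L[ℝ] E} {S T : ℝ → (E →L[ℝ] E)} {M MQ ω ωQ : ℝ} (hM : 0 ≤ M) (hMQ : 0 ≤ MQ)
    (hS : ∀ t : ℝ, 0 ≤ t → ‖S t‖ ≤ M * Real.exp (ω * t))
    (hT : ∀ t : ℝ, 0 ≤ t → ‖T t‖ ≤ MQ * Real.exp (ωQ * t))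
    (v : E) {s r b : ℝ} (hs : 0 ≤ s) (hsr : s ≤ r) (hrb : r ≤ b) :
    ‖P (S s (P (T (r - s) v)))‖ ≤
      M * MQ * ‖P‖ ^ 2 * max 1 (Real.exp (b * (ω - ωQ))) * max 1 (Real.exp (b * ωQ)) * ‖v‖ := by
  have hST : ‖S s‖ * ‖T (r - s)‖ ≤ M * MQ * (Real.exp (ω * s) * Real.exp (ωQ * (r - s))) :=
    calc ‖S s‖ * ‖T (r - s)‖ ≤ (M * Real.exp (ω * s)) * (MQ * Real.exp (ωQ * (r - s))) :=
          mul_le_mul (hS s hs) (hT _ (sub_nonneg.2 hsr)) (norm_nonneg _) (by positivity)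
      _ = M * MQ * (Real.exp (ω * s) * Real.exp (ωQ * (r - s))) := by ring
  have hexp := Real.exp_mul_mul_exp_mul_sub_le (ω := ω) (ωQ := ωQ) hs (hsr.trans hrb)
    (hs.trans hsr) hrb
  calc ‖P (S s (P (T (r - s) v)))‖ ≤ ‖P‖ ^ 2 * ‖S s‖ * ‖T (r - s)‖ * ‖v‖ :=
        P.norm_apply_apply_apply_apply_le _ _ v
    _ = ‖P‖ ^ 2 * (‖S s‖ * ‖T (r - s)‖) * ‖v‖ := by ring
    _ ≤ ‖P‖ ^ 2 * (M * MQ * (max 1 (Real.exp (b * (ω - ωQ))) * max 1 (Real.exp (b * ωQ))))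
          * ‖v‖ :=
        mul_le_mul_of_nonneg_right (mul_le_mul_of_nonneg_left
          (hST.trans (mul_le_mul_of_nonneg_left hexp (by positivity))) (by positivity))
          (norm_nonneg v)
    _ = _ := by ring

theorem mz_type1_FMA_accuracy_general
    {E : Type*} [NormedAddCommGroup E] [NormedSpace ℝ E]
    (P : E →L[ℝ] E) (S T : ℝ → (E →L[ℝ] E))
    (M MQ : ℝ) (hM : 0 < M) (hMQ : 0 < MQ) (ω ωQ : ℝ)
    (hS : ∀ t : ℝ, 0 ≤ t → ‖S t‖ ≤ M * Real.exp (ω * t))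
    (hT : ∀ t : ℝ, 0 ≤ t → ‖T t‖ ≤ MQ * Real.exp (ωQ * t))
    (Tf : ℝ) (p : ℕ) (hp : 1 ≤ p) (Δt : ℝ) (hΔt : 0 ≤ Δt)
    (A₁ A₂ : ℝ) (hA₁ : A₁ = max 1 (Real.exp (Tf * (ω - ωQ))))
    (hA₂ : A₂ = max 1 (Real.exp (Tf * ωQ)))
    (v : E) (t : ℝ) (ht0 : Δt ≤ t) (htT : t ≤ Tf) :
    ‖∫ σ in (0:ℝ)..(t - Δt), ((t - Δt - σ) ^ (p - 1) / (Nat.factorial (p - 1) : ℝ)) •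
        (∫ s in (0:ℝ)..σ, P (S s (P (T (σ + Δt - s) v))))‖ ≤
      M * MQ * ‖P‖ ^ 2 * A₁ * A₂ * ‖v‖ * (t - Δt) ^ (p + 1) / (Nat.factorial (p + 1) : ℝ) := by
  obtain ⟨q, rfl⟩ : ∃ q, p = q + 1 := ⟨p - 1, by omega⟩
  subst hA₁ hA₂
  refine norm_integral_sub_pow_div_factorial_smul_le q (sub_nonneg.2 ht0) ?_
  rintro σ ⟨hσ0, hστ⟩
  have hinner := intervalIntegral.norm_integral_le_of_norm_le_const (a := 0) (b := σ)
    (f := fun s => P (S s (P (T (σ + Δt - s) v)))) fun s hs => by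
      rw [Set.uIoc_of_le hσ0] at hs
      exact norm_memory_integrand_le (b := Tf) hM.le hMQ.le hS hT v hs.1.le (by linarith [hs.2])
        (by linarith)
  rwa [sub_zero, abs_of_nonneg hσ0] at hinner

/-- **Accuracy of the Type-I finite memory approximation** (Theorem 3.8,
abstract form). Bound on the error of the Type-I FMA of the Mori–Zwanzig
memory integral, written via Cauchy's formula for repeated integration. -/
theorem mz_type1_FMA_accuracy
    {E : Type*} [NormedAddCommGroup E] [NormedSpace ℝ E] [CompleteSpace E]
    (P : E →L[ℝ] E) (S T : ℝ → (E →L[ℝ] E))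
    (hScont : ∀ x : E, Continuous fun t : ℝ => S t x)
    (hTcont : ∀ x : E, Continuous fun t : ℝ => T t x)
    (M MQ : ℝ) (hM : 0 < M) (hMQ : 0 < MQ) (ω ωQ : ℝ)
    (hS : ∀ t : ℝ, 0 ≤ t → ‖S t‖ ≤ M * Real.exp (ω * t))
    (hT : ∀ t : ℝ, 0 ≤ t → ‖T t‖ ≤ MQ * Real.exp (ωQ * t))
    (Tf : ℝ) (hTf : 0 < Tf) (p : ℕ) (hp : 1 ≤ p) (Δt : ℝ) (hΔt : 0 ≤ Δt)
    (A₁ A₂ : ℝ) (hA₁ : A₁ = max 1 (Real.exp (Tf * (ω - ωQ))))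
    (hA₂ : A₂ = max 1 (Real.exp (Tf * ωQ)))
    (v : E) (t : ℝ) (ht0 : Δt ≤ t) (htT : t ≤ Tf) :
    ‖∫ σ in (0:ℝ)..(t - Δt), ((t - Δt - σ) ^ (p - 1) / (Nat.factorial (p - 1) : ℝ)) •
        (∫ s in (0:ℝ)..σ, P (S s (P (T (σ + Δt - s) v))))‖ ≤
      M * MQ * ‖P‖ ^ 2 * A₁ * A₂ * ‖v‖ * (t - Δt) ^ (p + 1) / (Nat.factorial (p + 1) : ℝ) :=
  mz_type1_FMA_accuracy_general P S T M MQ hM hMQ ω ωQ hS hT Tf p hp Δt hΔt A₁ A₂ hA₁ hA₂ v t ht0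
    htT
end

section
/- Let H be a complex Hilbert space, L : H → H a continuous linear operator, P : H → H an orthogonal projection (self-adjoint with P ∘ P = P), Q := id − P, and ω ∈ ℝ a constant such that the real part of ⟪u, L u⟫ is at most ω·‖u‖² for every u ∈ H. Then for every x ∈ H, the real part of ⟪x, L(Q x)⟫ is at most (1/2)·(√(ω² + ‖P ∘ L ∘ Q‖²) + ω)·‖x‖². In particular the numerical abscissa of L ∘ Q is bounded by (1/2)(√(ω² + ‖PLQ‖²) + ω), so ‖exp(t·(L ∘ Q))‖ ≤ exp((1/2)(√(ω² + ‖PLQ‖²) + ω)·t) for t ≥ 0. -/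
open ContinuousLinearMap

/-! With `Q = 1 - P`, split `x = Q x + P x` orthogonally. Then
`Re⟪x, L Q x⟫ = Re⟪Q x, L Q x⟫ + Re⟪P x, (P L Q) Q x⟫ ≤ ω s² + ‖PLQ‖ s t`
with `s = ‖Q x‖`, `t = ‖P x‖`, and `s² + t² = ‖x‖²`. The largest eigenvalue of the
quadratic form `ω s² + b s t` is `(√(ω² + b²) + ω) / 2`, which gives the numerical-abscissa
bound. The semigroup bound follows from it by Grönwall's inequality for `‖e^{tA} x‖²`,
whose derivative is `2 Re⟪e^{tA} x, A e^{tA} x⟫`. -/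

theorem mul_sq_add_mul_mul_le (ω b s t : ℝ) :
    ω * s ^ 2 + b * (s * t) ≤ 1 / 2 * (√(ω ^ 2 + b ^ 2) + ω) * (s ^ 2 + t ^ 2) := by
  have hr_sq := Real.sq_sqrt (by positivity : 0 ≤ ω ^ 2 + b ^ 2)
  have hr_nonneg := Real.sqrt_nonneg (ω ^ 2 + b ^ 2)
  set r := √(ω ^ 2 + b ^ 2)
  rcases hr_nonneg.eq_or_lt with hr | hr
  · obtain rfl : ω = 0 := by nlinarith
    obtain rfl : b = 0 := by nlinarith
    simp [← hr]
  -- `2 r` times the gap is `((r - ω) s - b t)² + ((r + ω) t - b s)²`.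
  · nlinarith [sq_nonneg ((r - ω) * s - b * t), sq_nonneg ((r + ω) * t - b * s)]

namespace IsStarProjection

variable {𝕜 E : Type*} [RCLike 𝕜] [NormedAddCommGroup E] [InnerProductSpace 𝕜 E]
  [CompleteSpace E] {P : E →L[𝕜] E}

theorem inner_apply_left_eq_right (hP : IsStarProjection P) (x y : E) :
    inner 𝕜 (P x) y = inner 𝕜 x (P y) :=
  hP.isSelfAdjoint.isSymmetric x y

theorem inner_apply_one_sub_apply (hP : IsStarProjection P) (x y : E) :
    inner 𝕜 (P x) ((1 - P) y) = 0 := by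
  rw [hP.inner_apply_left_eq_right, ← mul_apply_eq_comp, hP.mul_one_sub_self, zero_apply,
    inner_zero_right]

theorem norm_sq_eq_norm_sq_one_sub_apply_add (hP : IsStarProjection P) (x : E) :
    ‖x‖ ^ 2 = ‖(1 - P) x‖ ^ 2 + ‖P x‖ ^ 2 := by
  have hx : (1 - P) x + P x = x := by simp
  have horth : inner 𝕜 ((1 - P) x) (P x) = 0 :=
    inner_eq_zero_symm.mp (hP.inner_apply_one_sub_apply x x)
  rw [sq, sq, sq, ← norm_add_sq_eq_norm_sq_add_norm_sq_of_inner_eq_zero _ _ horth, hx]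

theorem inner_apply_one_sub_apply_eq (hP : IsStarProjection P) (A : E →L[𝕜] E) (x : E) :
    inner 𝕜 x (A ((1 - P) x)) =
      inner 𝕜 ((1 - P) x) (A ((1 - P) x)) + inner 𝕜 (P x) ((P * A * (1 - P)) ((1 - P) x)) := by
  have hx : (1 - P) x + P x = x := by simp
  have hQQ : (1 - P) ((1 - P) x) = (1 - P) x := by
    rw [← mul_apply_eq_comp, hP.one_sub.isIdempotentElem]
  have hPP : P (P x) = P x := by rw [← mul_apply_eq_comp, hP.isIdempotentElem]
  have hsplit := inner_add_left (𝕜 := 𝕜) ((1 - P) x) (P x) (A ((1 - P) x))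
  rw [hx] at hsplit
  rw [hsplit, mul_apply_eq_comp, mul_apply_eq_comp, hQQ, ← hP.inner_apply_left_eq_right, hPP]

theorem re_inner_apply_one_sub_apply_le (hP : IsStarProjection P) {A : E →L[𝕜] E} {ω : ℝ}
    (hA : ∀ u : E, RCLike.re (inner 𝕜 u (A u)) ≤ ω * ‖u‖ ^ 2) (x : E) :
    RCLike.re (inner 𝕜 x (A ((1 - P) x))) ≤
      1 / 2 * (√(ω ^ 2 + ‖P * A * (1 - P)‖ ^ 2) + ω) * ‖x‖ ^ 2 := by
  set B := P * A * (1 - P)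
  have hcross : RCLike.re (inner 𝕜 (P x) (B ((1 - P) x))) ≤ ‖B‖ * (‖(1 - P) x‖ * ‖P x‖) :=
    calc RCLike.re (inner 𝕜 (P x) (B ((1 - P) x)))
        _ ≤ ‖P x‖ * ‖B ((1 - P) x)‖ := re_inner_le_norm _ _
        _ ≤ ‖P x‖ * (‖B‖ * ‖(1 - P) x‖) := by gcongr; exact B.le_opNorm _
        _ = ‖B‖ * (‖(1 - P) x‖ * ‖P x‖) := by ring
  rw [hP.inner_apply_one_sub_apply_eq, map_add, hP.norm_sq_eq_norm_sq_one_sub_apply_add x]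
  linarith [hA ((1 - P) x), mul_sq_add_mul_mul_le ω ‖B‖ ‖(1 - P) x‖ ‖P x‖]

end IsStarProjection

section Exp

variable {E : Type*} [NormedAddCommGroup E] [InnerProductSpace ℂ E] [CompleteSpace E]

theorem hasDerivAt_exp_smul_apply (A : E →L[ℂ] E) (x : E) (s : ℝ) :
    HasDerivAt (fun u : ℝ => NormedSpace.exp ((u : ℂ) • A) x)
      (A (NormedSpace.exp ((s : ℂ) • A) x)) s := by
  have hexp := (hasDerivAt_exp_smul_const' A (s : ℂ)).scomp s (hasDerivAt_id s).ofReal_comp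
  simpa [Function.comp_def] using
    ((apply ℂ E x).restrictScalars ℝ).hasFDerivAt.comp_hasDerivAt s hexp

variable {A : E →L[ℂ] E} {c : ℝ}

theorem norm_exp_smul_apply_le_of_re_inner_le
    (hA : ∀ x : E, (inner ℂ x (A x) : ℂ).re ≤ c * ‖x‖ ^ 2) (x : E) {t : ℝ} (ht : 0 ≤ t) :
    ‖NormedSpace.exp ((t : ℂ) • A) x‖ ≤ Real.exp (c * t) * ‖x‖ := by
  set f := fun u : ℝ => NormedSpace.exp ((u : ℂ) • A) x
  have hderiv : ∀ u, HasDerivAt (fun u => ‖f u‖ ^ 2) (2 * (inner ℂ (f u) (A (f u))).re) u := by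
    intro u
    let _ : InnerProductSpace ℝ E := InnerProductSpace.rclikeToReal ℂ E
    simpa only [real_inner_eq_re_inner, RCLike.re_to_complex] using
      (hasDerivAt_exp_smul_apply A x u).norm_sq
  have hgronwall := le_gronwallBound_of_liminf_deriv_right_le (δ := ‖x‖ ^ 2) (K := 2 * c)
    (ε := 0) (b := t)
    (continuous_iff_continuousAt.mpr fun u => (hderiv u).continuousAt).continuousOn
    (fun u _ _ hr => (hderiv u).hasDerivWithinAt.liminf_right_slope_le hr)
    (by simp [f]) (fun u _ => by linarith [hA (f u)]) t ⟨ht, le_rfl⟩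
  rw [gronwallBound_ε0, sub_zero] at hgronwall
  refine (pow_le_pow_iff_left₀ (norm_nonneg _) (by positivity) two_ne_zero).mp ?_
  calc ‖f t‖ ^ 2 ≤ ‖x‖ ^ 2 * Real.exp (2 * c * t) := hgronwall
    _ = (Real.exp (c * t) * ‖x‖) ^ 2 := by rw [mul_pow, ← Real.exp_nat_mul]; ring_nf

theorem norm_exp_smul_le_of_re_inner_le
    (hA : ∀ x : E, (inner ℂ x (A x) : ℂ).re ≤ c * ‖x‖ ^ 2) {t : ℝ} (ht : 0 ≤ t) :
    ‖NormedSpace.exp ((t : ℂ) • A)‖ ≤ Real.exp (c * t) :=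
  opNorm_le_bound _ (Real.exp_nonneg _) fun x => norm_exp_smul_apply_le_of_re_inner_le hA x ht

end Exp

/-- **First computable bound on the numerical abscissa of `LQ`**
(equation (60a), Appendix A). If `P` is an orthogonal projection,
`Q = id − P`, and `Re⟪u, L u⟫ ≤ ω ‖u‖²` for all `u`, then the numerical
abscissa of `L ∘ Q` is at most `(√(ω² + ‖PLQ‖²) + ω)/2`, and consequently
`‖e^{t LQ}‖ ≤ e^{(√(ω² + ‖PLQ‖²) + ω) t / 2}` for `t ≥ 0`. -/
theorem LQ_numerical_abscissa_bound_decomposition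
    {H : Type*} [NormedAddCommGroup H] [InnerProductSpace ℂ H] [CompleteSpace H]
    (L P : H →L[ℂ] H)
    (hPadj : ContinuousLinearMap.adjoint P = P)
    (hPproj : P ∘L P = P)
    (Q : H →L[ℂ] H) (hQ : Q = ContinuousLinearMap.id ℂ H - P)
    (ω : ℝ) (hω : ∀ u : H, (inner ℂ u (L u) : ℂ).re ≤ ω * ‖u‖ ^ 2) :
    (∀ x : H, (inner ℂ x (L (Q x)) : ℂ).re ≤
        (1 / 2) * (Real.sqrt (ω ^ 2 + ‖P ∘L L ∘L Q‖ ^ 2) + ω) * ‖x‖ ^ 2) ∧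
    (∀ t : ℝ, 0 ≤ t →
        ‖NormedSpace.exp ((t : ℂ) • (L ∘L Q))‖ ≤
          Real.exp ((1 / 2) * (Real.sqrt (ω ^ 2 + ‖P ∘L L ∘L Q‖ ^ 2) + ω) * t)) := by
  have hP : IsStarProjection P := ⟨hPproj, hPadj⟩
  obtain rfl : Q = 1 - P := hQ
  have hLQ : ∀ x : H, (inner ℂ x ((L ∘L (1 - P)) x) : ℂ).re ≤
      (1 / 2) * (Real.sqrt (ω ^ 2 + ‖P ∘L L ∘L (1 - P)‖ ^ 2) + ω) * ‖x‖ ^ 2 :=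
    hP.re_inner_apply_one_sub_apply_le hω
  exact ⟨hLQ, fun _ ht => norm_exp_smul_le_of_re_inner_le hLQ ht⟩
end
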